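/- arXiv:1011.2679 — 3 statements merged into one kernel-verified Lean document; each statement's English description precedes it below -/
import Mathlib

section
/- Let n₁, n₂, n₃ be positive integers and let Ξ be the set of sequences of length n₁+n₂+n₃ over the three symbols {a, b, c} containing exactly n₁ a's, n₂ b's, and n₃ c's. Let X be uniformly distributed on Ξ. Define a random modification: choose uniformly at random one occurrence of a and (independently) one occurrence of c in X, and replace both by b. Then the resulting random sequence is uniformly distributed on the set of sequences with exactly n₁−1 a's, n₂+2 b's, and n₃−1 c's. -/
/-!
Double counting. A choice `(x, i, j)` of a string `x ∈ Ξ`, an `a`-position `i` and a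
`c`-position `j` is recovered from the modified string `xt` and the pair `(i, j)`, which can be
any ordered pair of distinct `b`-positions of `xt`. Hence every string `xt` of the target set `Ξ'`
arises from exactly `(n₂ + 2) (n₂ + 1)` of the `|Ξ| n₁ n₃` equally likely choices, and counting
all choices gives `|Ξ'| (n₂ + 2) (n₂ + 1) = |Ξ| n₁ n₃`.
-/

open Finset

/-- Number of occurrences of the symbol `s` in the string `x`. -/
def scount (n : ℕ) (x : Fin n → Fin 3) (s : Fin 3) : ℕ :=
  (Finset.univ.filter (fun i => x i = s)).card

/-- The set of strings of length `n` with exactly `n₁` `a`'s (`0`), `n₂` `b`'s (`1`)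
and `n₃` `c`'s (`2`). -/
def stringsWith (n n₁ n₂ n₃ : ℕ) : Finset (Fin n → Fin 3) :=
  Finset.univ.filter
    (fun x => scount n x 0 = n₁ ∧ scount n x 1 = n₂ ∧ scount n x 2 = n₃)

/-- Replace the symbols at positions `i` and `j` of `x` by `b` (`1`). -/
def blockModify (n : ℕ) (x : Fin n → Fin 3) (i j : Fin n) : Fin n → Fin 3 :=
  fun p => if p = i ∨ p = j then 1 else x p

section BlockModify

open Function

variable {n : ℕ}

lemma scount_update_add (x : Fin n → Fin 3) (i : Fin n) (s t : Fin 3) :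
    scount n (update x i s) t + (if x i = t then 1 else 0)
      = scount n x t + (if s = t then 1 else 0) := by
  have hupd : (fun p => if update x i s p = t then 1 else 0)
      = update (fun p => if x p = t then 1 else 0) i (if s = t then 1 else 0) :=
    (comp_update (fun u => if u = t then 1 else 0) x i s).symm ▸ rfl
  simp only [scount, card_filter, hupd, sum_update_of_mem (mem_univ i),
    sum_eq_add_sum_sdiff_singleton_of_mem (mem_univ i) (fun p => if x p = t then 1 else 0)]
  ring

lemma blockModify_eq_update (x : Fin n → Fin 3) (i j : Fin n) :
    blockModify n x i j = update (update x i 1) j 1 := by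
  ext p
  by_cases hpj : p = j <;> by_cases hpi : p = i <;> simp_all [blockModify]

lemma blockModify_mem_stringsWith {n₁ n₂ n₃ : ℕ} {x : Fin n → Fin 3} {i j : Fin n}
    (hx : x ∈ stringsWith n n₁ n₂ n₃) (hi : x i = 0) (hj : x j = 2) :
    blockModify n x i j ∈ stringsWith n (n₁ - 1) (n₂ + 2) (n₃ - 1) := by
  have hj' : update x i 1 j = 2 := by
    rw [update_of_ne (ne_of_apply_ne x (by rw [hi, hj]; decide)).symm, hj]
  have e₁ := fun t => scount_update_add x i 1 t
  have e₂ := fun t => scount_update_add (update x i 1) j 1 t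
  have := e₁ 0; have := e₁ 1; have := e₁ 2; have := e₂ 0; have := e₂ 1; have := e₂ 2
  simp [stringsWith, blockModify_eq_update, hi, hj'] at *
  omega

def blockRevert (n : ℕ) (xt : Fin n → Fin 3) (i j : Fin n) : Fin n → Fin 3 :=
  update (update xt j 2) i 0

lemma blockRevert_mem_stringsWith {n₁ n₂ n₃ : ℕ} (h₁ : 0 < n₁) (h₃ : 0 < n₃)
    {xt : Fin n → Fin 3} {i j : Fin n} (hxt : xt ∈ stringsWith n (n₁ - 1) (n₂ + 2) (n₃ - 1))
    (hij : i ≠ j) (hi : xt i = 1) (hj : xt j = 1) :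
    blockRevert n xt i j ∈ stringsWith n n₁ n₂ n₃ := by
  have hi' : update xt j 2 i = 1 := by rw [update_of_ne hij, hi]
  have e₁ := fun t => scount_update_add xt j 2 t
  have e₂ := fun t => scount_update_add (update xt j 2) i 0 t
  have := e₁ 0; have := e₁ 1; have := e₁ 2; have := e₂ 0; have := e₂ 1; have := e₂ 2
  simp [stringsWith, blockRevert, hj, hi'] at *
  omega

lemma blockModify_blockRevert {xt : Fin n → Fin 3} {i j : Fin n} (hi : xt i = 1)
    (hj : xt j = 1) : blockModify n (blockRevert n xt i j) i j = xt := by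
  ext p
  by_cases hpi : p = i <;> by_cases hpj : p = j <;> simp_all [blockModify, blockRevert]

lemma blockRevert_blockModify {x : Fin n → Fin 3} {i j : Fin n} (hi : x i = 0)
    (hj : x j = 2) : blockRevert n (blockModify n x i j) i j = x := by
  ext p
  by_cases hpi : p = i <;> by_cases hpj : p = j <;> simp_all [blockModify, blockRevert]

variable {n₁ n₂ n₃ : ℕ}

lemma mem_stringsWith {x : Fin n → Fin 3} :
    x ∈ stringsWith n n₁ n₂ n₃ ↔ scount n x 0 = n₁ ∧ scount n x 1 = n₂ ∧ scount n x 2 = n₃ := by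
  rw [stringsWith, mem_filter, and_iff_right (mem_univ x)]

def blockChoices (n n₁ n₂ n₃ : ℕ) : Finset ((Fin n → Fin 3) × Fin n × Fin n) :=
  (stringsWith n n₁ n₂ n₃ ×ˢ univ ×ˢ univ).filter fun c => c.1 c.2.1 = 0 ∧ c.1 c.2.2 = 2

lemma mem_blockChoices {x : Fin n → Fin 3} {i j : Fin n} :
    (x, i, j) ∈ blockChoices n n₁ n₂ n₃ ↔ x ∈ stringsWith n n₁ n₂ n₃ ∧ x i = 0 ∧ x j = 2 := by
  rw [blockChoices, mem_filter, mem_product, mem_product]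
  simp only [mem_univ, and_true]

lemma sum_blockChoices {M : Type*} [AddCommMonoid M] (g : (Fin n → Fin 3) × Fin n × Fin n → M) :
    ∑ c ∈ blockChoices n n₁ n₂ n₃, g c
      = ∑ x ∈ stringsWith n n₁ n₂ n₃, ∑ i ∈ univ.filter (x · = 0), ∑ j ∈ univ.filter (x · = 2),
          g (x, i, j) := by
  simp only [blockChoices, sum_filter, sum_product, ite_and]
  refine sum_congr rfl fun x _ => sum_congr rfl fun i _ => ?_
  split_ifs <;> simp

lemma card_blockChoices :
    (blockChoices n n₁ n₂ n₃).card = (stringsWith n n₁ n₂ n₃).card * (n₁ * n₃) := by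
  rw [card_eq_sum_ones, sum_blockChoices, card_eq_sum_ones, sum_mul]
  refine sum_congr rfl fun x hx => ?_
  obtain ⟨ha, -, hc⟩ := mem_stringsWith.mp hx
  simp [← ha, ← hc, scount]

lemma card_blockChoices_filter_blockModify_eq (h₁ : 0 < n₁) (h₃ : 0 < n₃)
    {xt : Fin n → Fin 3} (hxt : xt ∈ stringsWith n (n₁ - 1) (n₂ + 2) (n₃ - 1)) :
    ((blockChoices n n₁ n₂ n₃).filter fun c => blockModify n c.1 c.2.1 c.2.2 = xt).card
      = (n₂ + 2) * (n₂ + 1) := by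
  suffices h : ((blockChoices n n₁ n₂ n₃).filter fun c => blockModify n c.1 c.2.1 c.2.2 = xt).card
      = (univ.filter (xt · = 1)).offDiag.card by
    rw [h, offDiag_card, ← scount, (mem_stringsWith.mp hxt).2.1, ← Nat.mul_sub_one]
    rfl
  refine card_bij' (fun c _ => c.2) (fun p _ => (blockRevert n xt p.1 p.2, p.1, p.2))
    ?_ ?_ ?_ fun _ _ => rfl
  · rintro ⟨x, i, j⟩ hc
    obtain ⟨⟨-, hi, hj⟩, rfl⟩ := (mem_filter.mp hc).imp_left mem_blockChoices.mp
    have hij : i ≠ j := ne_of_apply_ne x (by rw [hi, hj]; decide)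
    simp [blockModify, hij]
  · rintro ⟨i, j⟩ hp
    obtain ⟨hi, hj, hij⟩ : xt i = 1 ∧ xt j = 1 ∧ i ≠ j := by simpa using hp
    refine mem_filter.mpr ⟨mem_blockChoices.mpr ⟨blockRevert_mem_stringsWith h₁ h₃ hxt hij hi hj,
      ?_, ?_⟩, blockModify_blockRevert hi hj⟩ <;> simp [blockRevert, Ne.symm hij]
  · rintro ⟨x, i, j⟩ hc
    obtain ⟨⟨-, hi, hj⟩, rfl⟩ := (mem_filter.mp hc).imp_left mem_blockChoices.mp
    simp [blockRevert_blockModify hi hj]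

lemma card_stringsWith_mul_eq (h₁ : 0 < n₁) (h₃ : 0 < n₃) :
    (stringsWith n (n₁ - 1) (n₂ + 2) (n₃ - 1)).card * ((n₂ + 2) * (n₂ + 1))
      = (stringsWith n n₁ n₂ n₃).card * (n₁ * n₃) := by
  have hmaps : ∀ c ∈ blockChoices n n₁ n₂ n₃,
      blockModify n c.1 c.2.1 c.2.2 ∈ stringsWith n (n₁ - 1) (n₂ + 2) (n₃ - 1) := by
    rintro ⟨x, i, j⟩ hc
    obtain ⟨hx, hi, hj⟩ := mem_blockChoices.mp hc
    exact blockModify_mem_stringsWith hx hi hj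
  rw [← card_blockChoices, card_eq_sum_card_fiberwise hmaps,
    sum_congr rfl fun xt hxt => card_blockChoices_filter_blockModify_eq h₁ h₃ hxt,
    sum_const, smul_eq_mul]

lemma sum_ite_blockModify_eq_card (xt : Fin n → Fin 3) :
    ∑ x ∈ stringsWith n n₁ n₂ n₃, ∑ i ∈ univ.filter (x · = 0), ∑ j ∈ univ.filter (x · = 2),
        (if blockModify n x i j = xt then (1 : ℝ) else 0)
      = ((blockChoices n n₁ n₂ n₃).filter fun c => blockModify n c.1 c.2.1 c.2.2 = xt).card := by
  rw [card_filter, Nat.cast_sum, sum_blockChoices]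
  push_cast
  rfl

lemma filter_blockModify_eq_eq_empty {xt : Fin n → Fin 3}
    (hxt : xt ∉ stringsWith n (n₁ - 1) (n₂ + 2) (n₃ - 1)) :
    (blockChoices n n₁ n₂ n₃).filter (fun c => blockModify n c.1 c.2.1 c.2.2 = xt) = ∅ := by
  refine filter_eq_empty_iff.mpr ?_
  rintro ⟨x, i, j⟩ hc rfl
  obtain ⟨hx, hi, hj⟩ := mem_blockChoices.mp hc
  exact hxt (blockModify_mem_stringsWith hx hi hj)

end BlockModify

theorem stmt_7_general (n₁ n₂ n₃ : ℕ) (h₁ : 0 < n₁) (h₃ : 0 < n₃) :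
    ∀ xt : Fin (n₁ + n₂ + n₃) → Fin 3,
      (∑ x ∈ stringsWith (n₁ + n₂ + n₃) n₁ n₂ n₃,
          ∑ i ∈ Finset.univ.filter (fun i => x i = 0),
            ∑ j ∈ Finset.univ.filter (fun j => x j = 2),
              (if blockModify (n₁ + n₂ + n₃) x i j = xt then (1 : ℝ) else 0))
          / (((stringsWith (n₁ + n₂ + n₃) n₁ n₂ n₃).card : ℝ) * n₁ * n₃)
        = if xt ∈ stringsWith (n₁ + n₂ + n₃) (n₁ - 1) (n₂ + 2) (n₃ - 1)
            then ((stringsWith (n₁ + n₂ + n₃) (n₁ - 1) (n₂ + 2) (n₃ - 1)).card : ℝ)⁻¹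
            else 0 := by
  intro xt
  rw [sum_ite_blockModify_eq_card]
  split_ifs with hxt
  · have hcard := card_stringsWith_mul_eq (n := n₁ + n₂ + n₃) (n₂ := n₂) h₁ h₃
    have htarget : 0 < (stringsWith (n₁ + n₂ + n₃) (n₁ - 1) (n₂ + 2) (n₃ - 1)).card :=
      card_pos.mpr ⟨xt, hxt⟩
    have hsource : 0 < (stringsWith (n₁ + n₂ + n₃) n₁ n₂ n₃).card :=
      Nat.pos_of_mul_pos_right (b := n₁ * n₃) (hcard ▸ by positivity)
    rw [card_blockChoices_filter_blockModify_eq h₁ h₃ hxt, div_eq_iff (by positivity),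
      eq_inv_mul_iff_mul_eq₀ (by positivity)]
    exact_mod_cast hcard.trans (mul_assoc _ _ _).symm
  · rw [filter_blockModify_eq_eq_empty hxt, card_empty, Nat.cast_zero, zero_div]

/-- If `X` is uniform on the strings with exactly `n₁` `a`'s, `n₂` `b`'s and `n₃` `c`'s,
and we choose uniformly one occurrence of `a` and one occurrence of `c` and replace both
by `b`, then the result is uniform on the strings with `n₁−1` `a`'s, `n₂+2` `b`'s and
`n₃−1` `c`'s: for every string `xt`, the probability of obtaining `xt` equals the uniform
probability on the target set. -/
theorem stmt_7 (n₁ n₂ n₃ : ℕ) (h₁ : 0 < n₁) (h₂ : 0 < n₂) (h₃ : 0 < n₃) :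
    ∀ xt : Fin (n₁ + n₂ + n₃) → Fin 3,
      (∑ x ∈ stringsWith (n₁ + n₂ + n₃) n₁ n₂ n₃,
          ∑ i ∈ Finset.univ.filter (fun i => x i = 0),
            ∑ j ∈ Finset.univ.filter (fun j => x j = 2),
              (if blockModify (n₁ + n₂ + n₃) x i j = xt then (1 : ℝ) else 0))
          / (((stringsWith (n₁ + n₂ + n₃) n₁ n₂ n₃).card : ℝ) * n₁ * n₃)
        = if xt ∈ stringsWith (n₁ + n₂ + n₃) (n₁ - 1) (n₂ + 2) (n₃ - 1)
            then ((stringsWith (n₁ + n₂ + n₃) (n₁ - 1) (n₂ + 2) (n₃ - 1)).card : ℝ)⁻¹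
            else 0 :=
  stmt_7_general n₁ n₂ n₃ h₁ h₃
end

section
/- Let Z be an integer-valued random variable taking values in a finite arithmetic progression {z₀, z₀+4, …, z₀+4d} whose probability mass function p satisfies 1 − K/√n ≤ p(z+4)/p(z) ≤ 1 + K/√n for all consecutive points (for a constant K > 0 and parameter n), and suppose the number of points satisfies d ≥ c√n/2 for a constant c > 0. Then there is a constant C > 0 depending only on K and c (not on n) such that Var[Z] ≥ C·n for all n large enough. -/
/-!
Consecutive ratios within `1 ± x` and `4 L x ≤ 1` make any two probabilities at distance `2 L`
agree up to a factor `2`. Whatever the centre `m`, the points within distance `L` of `m` can be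
shifted by `2 L` (to the right or to the left, as the length `d ≥ 6 L` allows) onto points at
distance at least `L`, so at least a third of the mass lies at distance `≥ L` from `m`. Taking
`m` the mean and `L ≍ √n` gives a variance `≳ L² ≍ n`.
-/

open Finset Real

theorem Finset.sum_le_sum_of_injOn {ι κ M : Type*} [AddCommMonoid M] [PartialOrder M]
    [IsOrderedAddMonoid M] [DecidableEq κ] {s : Finset ι} {t : Finset κ} {f : ι → M}
    {g : κ → M} (σ : ι → κ) (hmaps : Set.MapsTo σ s t) (hinj : Set.InjOn σ s)
    (hle : ∀ i ∈ s, f i ≤ g (σ i)) (hg : ∀ j ∈ t, 0 ≤ g j) :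
    ∑ i ∈ s, f i ≤ ∑ j ∈ t, g j :=
  calc ∑ i ∈ s, f i ≤ ∑ i ∈ s, g (σ i) := sum_le_sum hle
    _ = ∑ j ∈ s.image σ, g j := (sum_image hinj).symm
    _ ≤ ∑ j ∈ t, g j :=
      sum_le_sum_of_subset_of_nonneg (image_subset_iff.mpr hmaps) fun j hj _ ↦ hg j hj

section Chain

variable {R : Type*} [Semiring R] [PartialOrder R] [IsOrderedRing R] {q : ℕ → R} {r : R}
  {d : ℕ}

theorem pow_mul_le_add_of_forall_mul_le_succ (hr : 0 ≤ r)
    (h : ∀ i < d, r * q i ≤ q (i + 1)) {a s : ℕ} (has : a + s ≤ d) :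
    r ^ s * q a ≤ q (a + s) := by
  induction s with
  | zero => simp
  | succ s ih =>
    calc r ^ (s + 1) * q a = r * (r ^ s * q a) := by rw [pow_succ', mul_assoc]
      _ ≤ r * q (a + s) := mul_le_mul_of_nonneg_left (ih (by omega)) hr
      _ ≤ q (a + (s + 1)) := h (a + s) (by omega)

theorem pow_mul_add_le_of_forall_mul_succ_le (hr : 0 ≤ r)
    (h : ∀ i < d, r * q (i + 1) ≤ q i) {a s : ℕ} (has : a + s ≤ d) :
    r ^ s * q (a + s) ≤ q a := by
  induction s with
  | zero => simp
  | succ s ih =>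
    calc r ^ (s + 1) * q (a + (s + 1)) = r ^ s * (r * q (a + s + 1)) := by
          rw [pow_succ, mul_assoc, add_assoc]
      _ ≤ r ^ s * q (a + s) := mul_le_mul_of_nonneg_left (h (a + s) (by omega)) (pow_nonneg hr s)
      _ ≤ q a := ih (by omega)

end Chain

def AlmostFlat (p : ℕ → ℝ) (d : ℕ) (x : ℝ) : Prop :=
  ∀ i < d, (1 - x) * p i ≤ p (i + 1) ∧ p (i + 1) ≤ (1 + x) * p i

namespace AlmostFlat

variable {p : ℕ → ℝ} {d : ℕ} {x : ℝ}

theorem one_sub_mul_succ_le (hf : AlmostFlat p d x) (hp : ∀ i ≤ d, 0 ≤ p i) (hx : x ≤ 1)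
    {i : ℕ} (hi : i < d) : (1 - x) * p (i + 1) ≤ p i :=
  calc (1 - x) * p (i + 1) ≤ (1 - x) * ((1 + x) * p i) :=
        mul_le_mul_of_nonneg_left (hf i hi).2 (by linarith)
    _ = p i - x ^ 2 * p i := by ring
    _ ≤ p i := sub_le_self _ (mul_nonneg (sq_nonneg x) (hp i hi.le))

theorem le_two_mul_shift (hf : AlmostFlat p d x) (hp : ∀ i ≤ d, 0 ≤ p i) (hx : x ≤ 1)
    {s : ℕ} (hs : 1 / 2 ≤ (1 - x) ^ s) {a : ℕ} (has : a + s ≤ d) :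
    p a ≤ 2 * p (a + s) ∧ p (a + s) ≤ 2 * p a := by
  have hx' : 0 ≤ 1 - x := by linarith
  have up := pow_mul_le_add_of_forall_mul_le_succ hx' (fun i hi ↦ (hf i hi).1) has
  have down := pow_mul_add_le_of_forall_mul_succ_le hx'
    (fun i hi ↦ hf.one_sub_mul_succ_le hp hx hi) has
  have ha := hp a (by omega)
  have has' := hp (a + s) has
  constructor <;> nlinarith [mul_le_mul_of_nonneg_right hs ha, mul_le_mul_of_nonneg_right hs has']

end AlmostFlat

section Window

variable {p : ℕ → ℝ} {d L : ℕ}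

theorem sum_near_le_two_mul_sum_far (hp : ∀ i ≤ d, 0 ≤ p i) (hdL : 6 * L ≤ d)
    (hcmp : ∀ a, a + 2 * L ≤ d → p a ≤ 2 * p (a + 2 * L) ∧ p (a + 2 * L) ≤ 2 * p a)
    (m : ℝ) :
    ∑ i ∈ range (d + 1) with |((i : ℕ) : ℝ) - m| < L, p i
      ≤ 2 * ∑ i ∈ range (d + 1) with (L : ℝ) ≤ |((i : ℕ) : ℝ) - m|, p i := by
  set far := (range (d + 1)).filter fun i : ℕ ↦ (L : ℝ) ≤ |(i : ℝ) - m|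
  set near := (range (d + 1)).filter fun i : ℕ ↦ |(i : ℝ) - m| < L
  have hnear : ∀ j ∈ near, j ≤ d ∧ m - L < j ∧ (j : ℝ) < m + L := by
    intro j hj
    simp only [near, mem_filter, mem_range, abs_lt] at hj
    exact ⟨by omega, by linarith, by linarith⟩
  have hfar_nonneg : ∀ j ∈ far, 0 ≤ 2 * p j := fun j hj ↦
    mul_nonneg zero_le_two (hp j (Nat.lt_succ_iff.mp (mem_range.mp (mem_filter.mp hj).1)))
  rw [mul_sum]
  rcases le_or_gt (m + 3 * L) d with hm | hm
  · have hfit : ∀ j ∈ near, j + 2 * L ≤ d := fun j hj ↦ by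
      have := (hnear j hj).2.2
      exact_mod_cast (by push_cast; linarith : ((j + 2 * L : ℕ) : ℝ) ≤ d)
    refine sum_le_sum_of_injOn (· + 2 * L) (fun j hj ↦ ?_) (fun a _ b _ h ↦ by simpa using h)
      (fun j hj ↦ (hcmp j (hfit j hj)).1) hfar_nonneg
    have := (hnear j hj).2.1
    simp only [far, mem_coe, mem_filter, mem_range]
    exact ⟨by have := hfit j hj; omega, le_abs.mpr (Or.inl (by push_cast; linarith))⟩
  · -- here `m > d - 3 L ≥ 3 L`, so the window can be shifted to the left
    have hfit : ∀ j ∈ near, 2 * L ≤ j := fun j hj ↦ by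
      have := (hnear j hj).2.1
      have : (6 * L : ℝ) ≤ d := by exact_mod_cast hdL
      exact_mod_cast (by push_cast; linarith : ((2 * L : ℕ) : ℝ) ≤ j)
    refine sum_le_sum_of_injOn (· - 2 * L) (fun j hj ↦ ?_)
      (fun a ha b hb h ↦ by have := hfit a ha; have := hfit b hb; simp only at h; omega)
      (fun j hj ↦ ?_) hfar_nonneg
    · have := (hnear j hj).2.2
      simp only [far, mem_coe, mem_filter, mem_range]
      refine ⟨by have := (hnear j hj).1; omega, le_abs.mpr (Or.inr ?_)⟩
      rw [Nat.cast_sub (hfit j hj)]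
      push_cast
      linarith
    · have := (hcmp (j - 2 * L) (by have := (hnear j hj).1; omega)).2
      rwa [Nat.sub_add_cancel (hfit j hj)] at this

theorem one_div_three_le_sum_far (hp : ∀ i ≤ d, 0 ≤ p i)
    (hsum : ∑ i ∈ range (d + 1), p i = 1) (hdL : 6 * L ≤ d)
    (hcmp : ∀ a, a + 2 * L ≤ d → p a ≤ 2 * p (a + 2 * L) ∧ p (a + 2 * L) ≤ 2 * p a)
    (m : ℝ) :
    1 / 3 ≤ ∑ i ∈ range (d + 1) with (L : ℝ) ≤ |((i : ℕ) : ℝ) - m|, p i := by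
  have hsplit := sum_filter_add_sum_filter_not (range (d + 1))
    (fun i : ℕ ↦ (L : ℝ) ≤ |(i : ℝ) - m|) p
  simp only [not_le, hsum] at hsplit
  linarith [sum_near_le_two_mul_sum_far hp hdL hcmp m]

end Window

theorem sq_mul_sum_filter_le_sum_mul_sq {ι : Type*} (s : Finset ι) {p : ι → ℝ}
    (y : ι → ℝ) {t : ℝ} (hp : ∀ i ∈ s, 0 ≤ p i) (ht : 0 ≤ t) :
    t ^ 2 * ∑ i ∈ s with t ≤ |y i|, p i ≤ ∑ i ∈ s, p i * y i ^ 2 := by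
  rw [mul_sum]
  calc ∑ i ∈ s with t ≤ |y i|, t ^ 2 * p i
      ≤ ∑ i ∈ s with t ≤ |y i|, p i * y i ^ 2 := by
        refine sum_le_sum fun i hi ↦ ?_
        obtain ⟨his, hty⟩ := mem_filter.mp hi
        rw [mul_comm, ← sq_abs (y i)]
        exact mul_le_mul_of_nonneg_left (pow_le_pow_left₀ ht hty 2) (hp i his)
    _ ≤ ∑ i ∈ s, p i * y i ^ 2 :=
        sum_le_sum_of_subset_of_nonneg (filter_subset _ _)
          fun i hi _ ↦ mul_nonneg (hp i hi) (sq_nonneg _)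

theorem AlmostFlat.sq_div_three_le_sum_mul_sq_sub {p : ℕ → ℝ} {d L : ℕ} {x : ℝ}
    (hf : AlmostFlat p d x) (hp : ∀ i ≤ d, 0 ≤ p i) (hsum : ∑ i ∈ range (d + 1), p i = 1)
    (hx : x ≤ 1) (hLx : 4 * L * x ≤ 1) (hdL : 6 * L ≤ d) (m : ℝ) :
    (L : ℝ) ^ 2 / 3 ≤ ∑ i ∈ range (d + 1), p i * ((i : ℝ) - m) ^ 2 := by
  have hhalf : 1 / 2 ≤ (1 - x) ^ (2 * L) := by
    have := one_add_mul_le_pow (a := -x) (by linarith) (2 * L)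
    rw [← sub_eq_add_neg] at this
    push_cast at this
    linarith
  have hfar := one_div_three_le_sum_far hp hsum hdL
    (fun a ha ↦ hf.le_two_mul_shift hp hx hhalf ha) m
  have hcheb := sq_mul_sum_filter_le_sum_mul_sq (range (d + 1)) (fun i : ℕ ↦ (i : ℝ) - m)
    (fun i hi ↦ hp i (Nat.lt_succ_iff.mp (mem_range.mp hi))) (Nat.cast_nonneg L)
  nlinarith [sq_nonneg (L : ℝ)]

theorem exists_nat_ge_le_two_mul {t : ℝ} (ht : 1 ≤ t) :
    ∃ L : ℕ, t ≤ L ∧ (L : ℝ) ≤ 2 * t :=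
  ⟨⌈t⌉₊, Nat.le_ceil t, by linarith [Nat.ceil_lt_add_one (by linarith : (0 : ℝ) ≤ t)]⟩

/-- An almost-flat distribution on an arithmetic progression of step 4 with at least
`c√n/2` points (consecutive probability ratios within `1 ± K/√n`) has variance at
least `C·n` for a constant `C > 0` depending only on `K` and `c`, for `n` large. -/
theorem stmt_13 (K c : ℝ) (hK : 0 < K) (hc : 0 < c) :
    ∃ C > 0, ∃ n₀ : ℕ, ∀ n : ℕ, n₀ ≤ n →
      ∀ (z₀ : ℤ) (d : ℕ) (p : ℕ → ℝ),
        (∀ i ≤ d, 0 ≤ p i) →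
        (∑ i ∈ Finset.range (d + 1), p i = 1) →
        (∀ i < d, (1 - K / Real.sqrt n) * p i ≤ p (i + 1)
          ∧ p (i + 1) ≤ (1 + K / Real.sqrt n) * p i) →
        c * Real.sqrt n / 2 ≤ (d : ℝ) →
        C * (n : ℝ) ≤ ∑ i ∈ Finset.range (d + 1),
          p i * (((z₀ : ℝ) + 4 * (i : ℝ))
            - ∑ j ∈ Finset.range (d + 1), p j * ((z₀ : ℝ) + 4 * (j : ℝ))) ^ 2 := by
  -- with `γ √n ≤ L ≤ 2 γ √n`, these bounds give `4 L K / √n ≤ 1` and `6 L ≤ c √n / 2`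
  set γ := min (1 / (8 * K)) (c / 24)
  have hγ : 0 < γ := lt_min (by positivity) (by positivity)
  have hγK : 8 * K * γ ≤ 1 := (le_div_iff₀' (by positivity)).mp (min_le_left _ _)
  have hγc : γ ≤ c / 24 := min_le_right _ _
  refine ⟨16 * γ ^ 2 / 3, by positivity, ⌈1 / γ ^ 2⌉₊,
    fun n hn z₀ d p hp hsum hflat hd ↦ ?_⟩
  have hγn : 1 ≤ γ * √n := by
    refine (one_le_sq_iff₀ (by positivity)).mp ?_
    rw [mul_pow, sq_sqrt (Nat.cast_nonneg n), ← div_le_iff₀' (by positivity)]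
    exact Nat.ceil_le.mp hn
  have hsn : 0 < √n := pos_of_mul_pos_right (by linarith) hγ.le
  obtain ⟨L, hLlo, hLhi⟩ := exists_nat_ge_le_two_mul hγn
  have hLx : 4 * L * (K / √n) ≤ 1 :=
    calc 4 * L * (K / √n) ≤ 4 * (2 * (γ * √n)) * (K / √n) := by gcongr
      _ = 8 * K * γ := by field_simp; ring
      _ ≤ 1 := hγK
  have hx : K / √n ≤ 1 := by
    have : (1 : ℝ) ≤ L := by linarith
    nlinarith [div_nonneg hK.le hsn.le]
  have hdL : 6 * L ≤ d := by
    have : (6 * L : ℝ) ≤ d := by nlinarith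
    exact_mod_cast this
  set μ := ∑ j ∈ range (d + 1), p j * ((z₀ : ℝ) + 4 * (j : ℝ))
  have hvar := AlmostFlat.sq_div_three_le_sum_mul_sq_sub hflat hp hsum hx hLx hdL ((μ - z₀) / 4)
  calc 16 * γ ^ 2 / 3 * n = 16 * ((γ * √n) ^ 2 / 3) := by
        rw [mul_pow, sq_sqrt (Nat.cast_nonneg n)]; ring
    _ ≤ 16 * ((L : ℝ) ^ 2 / 3) := by gcongr
    _ ≤ 16 * ∑ i ∈ range (d + 1), p i * ((i : ℝ) - (μ - z₀) / 4) ^ 2 := by gcongr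
    _ = _ := by rw [mul_sum]; exact sum_congr rfl fun i _ ↦ by ring
end

section
/- Let N₁, N₂, N₃ be the counts of the three outcomes in t i.i.d. trials each uniform on three values. If (n₁, n₂, n₃) with n₁+n₂+n₃ = t and each nᵢ within k√t of t/3 for a fixed constant k, then P(N₁=n₁, N₂=n₂, N₃=n₃) = multinomial(t; n₁,n₂,n₃)·(1/3)^t ≥ k₀/t for a constant k₀ > 0 depending only on k, for all t large enough. -/
/-!
Stirling's bounds `√(2πn) (n/e)^n ≤ n! ≤ (e/√(2π)) √(2πn) (n/e)^n` (for `n ≥ 1`) reduce the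
probability to a constant times `√(2πt) / ∏ √(2πnᵢ) ≥ 1/(2πt)` times the entropy factor
`t^t / ∏ (3nᵢ)^nᵢ`. Applying `1 + u ≤ eᵘ` to `u = 3nᵢ/t - 1` bounds the latter below by
`exp (-3 ∑ (nᵢ - t/3)² / t)`, which is at least `exp (-9k²)` in the central region.
-/

open Real
open scoped Nat

noncomputable def stirlingApprox (n : ℕ) : ℝ := √(2 * π * n) * (n / exp 1) ^ n

lemma stirlingApprox_pos {n : ℕ} (hn : n ≠ 0) : 0 < stirlingApprox n := by
  unfold stirlingApprox; positivity

lemma stirlingApprox_le_factorial (n : ℕ) : stirlingApprox n ≤ n ! :=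
  Stirling.le_factorial_stirling n

lemma factorial_le_stirlingApprox {n : ℕ} (hn : n ≠ 0) :
    (n ! : ℝ) ≤ exp 1 / √(2 * π) * stirlingApprox n := by
  obtain ⟨m, rfl⟩ := Nat.exists_eq_add_one_of_ne_zero hn
  have h : Stirling.stirlingSeq (m + 1) ≤ Stirling.stirlingSeq 1 :=
    Stirling.stirlingSeq'_antitone (Nat.zero_le m)
  rw [Stirling.stirlingSeq_one, Stirling.stirlingSeq, div_le_iff₀ (by positivity)] at h
  refine h.trans_eq ?_
  rw [stirlingApprox, sqrt_mul' _ (Nat.cast_nonneg _), sqrt_mul' _ (Nat.cast_nonneg _),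
    sqrt_mul zero_le_two]
  field_simp

lemma stirlingApprox_div_mul_third_pow_eq {n₁ n₂ n₃ : ℕ} (h₁ : n₁ ≠ 0) (h₂ : n₂ ≠ 0)
    (h₃ : n₃ ≠ 0) :
    stirlingApprox (n₁ + n₂ + n₃) / (stirlingApprox n₁ * stirlingApprox n₂ * stirlingApprox n₃)
        * (1 / 3) ^ (n₁ + n₂ + n₃) =
      √(2 * π * (n₁ + n₂ + n₃ : ℕ)) / (√(2 * π * n₁) * √(2 * π * n₂) * √(2 * π * n₃))
        * (((n₁ + n₂ + n₃ : ℕ) : ℝ) ^ (n₁ + n₂ + n₃)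
          / ((3 * n₁ : ℝ) ^ n₁ * (3 * n₂) ^ n₂ * (3 * n₃) ^ n₃)) := by
  simp only [stirlingApprox, div_pow, mul_pow, one_pow, pow_add]
  field_simp

lemma one_div_le_sqrt_div_sqrt_mul_sqrt_mul_sqrt {x a b c : ℝ} (ha : 0 < a) (hb : 0 < b)
    (hc : 0 < c) (hax : a ≤ x) (hbx : b ≤ x) (hcx : c ≤ x) :
    1 / x ≤ √x / (√a * √b * √c) := by
  have hx : 0 < x := ha.trans_le hax
  rw [div_le_div_iff₀ hx (by positivity), one_mul]
  calc √a * √b * √c ≤ √x * √x * √x := by gcongr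
    _ = √x * x := by rw [mul_self_sqrt hx.le, mul_comm]

lemma pow_le_pow_mul_exp {x y : ℝ} (hy : 0 ≤ y) (hx : 0 < x) (n : ℕ) :
    y ^ n ≤ x ^ n * exp (n * (y / x - 1)) := by
  have h : y ≤ x * exp (y / x - 1) := by
    rw [← div_le_iff₀' hx]
    simpa using add_one_le_exp (y / x - 1)
  rw [exp_nat_mul, ← mul_pow]
  exact pow_le_pow_left₀ hy h n

noncomputable def sqDeviation (n₁ n₂ n₃ : ℕ) : ℝ :=
  ((n₁ : ℝ) - (n₁ + n₂ + n₃ : ℕ) / 3) ^ 2 + ((n₂ : ℝ) - (n₁ + n₂ + n₃ : ℕ) / 3) ^ 2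
    + ((n₃ : ℝ) - (n₁ + n₂ + n₃ : ℕ) / 3) ^ 2

lemma three_mul_pow_mul_le {n₁ n₂ n₃ : ℕ} (ht : n₁ + n₂ + n₃ ≠ 0) :
    (3 * n₁ : ℝ) ^ n₁ * (3 * n₂) ^ n₂ * (3 * n₃) ^ n₃ ≤
      ((n₁ + n₂ + n₃ : ℕ) : ℝ) ^ (n₁ + n₂ + n₃)
        * exp (3 * sqDeviation n₁ n₂ n₃ / (n₁ + n₂ + n₃ : ℕ)) := by
  set t := n₁ + n₂ + n₃ with ht_def
  have htpos : (0 : ℝ) < t := by positivity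
  have key (n : ℕ) := pow_le_pow_mul_exp (by positivity : (0 : ℝ) ≤ 3 * n) htpos n
  have hexp : 3 * sqDeviation n₁ n₂ n₃ / t
      = n₁ * (3 * n₁ / t - 1) + n₂ * (3 * n₂ / t - 1) + n₃ * (3 * n₃ / t - 1) := by
    have : (t : ℝ) = n₁ + n₂ + n₃ := by push_cast [ht_def]; ring
    rw [sqDeviation, ← ht_def]
    field_simp
    rw [this]
    ring
  calc _ ≤ ((t : ℝ) ^ n₁ * exp (n₁ * (3 * n₁ / t - 1)))
        * ((t : ℝ) ^ n₂ * exp (n₂ * (3 * n₂ / t - 1)))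
        * ((t : ℝ) ^ n₃ * exp (n₃ * (3 * n₃ / t - 1))) := by
        gcongr <;> exact key _
    _ = _ := by
      rw [hexp, exp_add, exp_add, ht_def, pow_add, pow_add]
      ring

lemma stirlingApprox_div_le_factorial_div (t : ℕ) {n₁ n₂ n₃ : ℕ} (h₁ : n₁ ≠ 0) (h₂ : n₂ ≠ 0)
    (h₃ : n₃ ≠ 0) :
    (exp 1 / √(2 * π))⁻¹ ^ 3
        * (stirlingApprox t / (stirlingApprox n₁ * stirlingApprox n₂ * stirlingApprox n₃)) ≤
      (t ! : ℝ) / (n₁ ! * n₂ ! * n₃ !) := by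
  have := stirlingApprox_pos h₁
  have := stirlingApprox_pos h₂
  have := stirlingApprox_pos h₃
  have hden : (n₁ ! * n₂ ! * n₃ ! : ℝ) ≤
      (stirlingApprox n₁ * stirlingApprox n₂ * stirlingApprox n₃) * (exp 1 / √(2 * π)) ^ 3 :=
    calc (n₁ ! * n₂ ! * n₃ ! : ℝ)
        ≤ (exp 1 / √(2 * π) * stirlingApprox n₁) * (exp 1 / √(2 * π) * stirlingApprox n₂)
          * (exp 1 / √(2 * π) * stirlingApprox n₃) := by
          gcongr ?_ * ?_ * ?_ <;> exact factorial_le_stirlingApprox ‹_›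
      _ = _ := by ring
  rw [inv_pow, inv_mul_eq_div, div_div]
  exact div_le_div₀ (by positivity) (stirlingApprox_le_factorial t) (by positivity) hden

theorem le_factorial_div_mul_third_pow {n₁ n₂ n₃ : ℕ} (h₁ : n₁ ≠ 0) (h₂ : n₂ ≠ 0)
    (h₃ : n₃ ≠ 0) :
    √(2 * π) / exp 1 ^ 3 * exp (-(3 * sqDeviation n₁ n₂ n₃ / (n₁ + n₂ + n₃ : ℕ)))
        / (n₁ + n₂ + n₃ : ℕ) ≤
      ((n₁ + n₂ + n₃) ! : ℝ) / (n₁ ! * n₂ ! * n₃ !) * (1 / 3) ^ (n₁ + n₂ + n₃) := by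
  set t := n₁ + n₂ + n₃ with ht_def
  have ht : t ≠ 0 := by omega
  have htpos : (0 : ℝ) < t := by positivity
  have hsqrt :
      1 / (2 * π * t) ≤ √(2 * π * t) / (√(2 * π * n₁) * √(2 * π * n₂) * √(2 * π * n₃)) :=
    one_div_le_sqrt_div_sqrt_mul_sqrt_mul_sqrt (by positivity) (by positivity) (by positivity)
      (by gcongr; omega) (by gcongr; omega) (by gcongr; omega)
  have hentropy : exp (-(3 * sqDeviation n₁ n₂ n₃ / t)) ≤
      (t : ℝ) ^ t / ((3 * n₁ : ℝ) ^ n₁ * (3 * n₂) ^ n₂ * (3 * n₃) ^ n₃) := by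
    rw [le_div_iff₀ (by positivity), exp_neg, inv_mul_le_iff₀ (exp_pos _)]
    exact (three_mul_pow_mul_le ht).trans_eq (mul_comm _ _)
  calc _ = (exp 1 / √(2 * π))⁻¹ ^ 3 * (1 / (2 * π * t))
        * exp (-(3 * sqDeviation n₁ n₂ n₃ / t)) := by
        have hsq : √(2 * π) ^ 3 = 2 * π * √(2 * π) := by
          rw [pow_succ, sq_sqrt (by positivity)]
        rw [inv_div, div_pow, hsq]
        field_simp
    _ ≤ (exp 1 / √(2 * π))⁻¹ ^ 3 * (stirlingApprox t
          / (stirlingApprox n₁ * stirlingApprox n₂ * stirlingApprox n₃) * (1 / 3) ^ t) := by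
        rw [stirlingApprox_div_mul_third_pow_eq h₁ h₂ h₃, mul_assoc]
        gcongr
    _ ≤ _ := by
        rw [← mul_assoc]
        gcongr
        exact stirlingApprox_div_le_factorial_div t h₁ h₂ h₃

lemma sq_sub_le_of_abs_sub_le_mul_sqrt {x m k t : ℝ} (ht : 0 ≤ t) (h : |x - m| ≤ k * √t) :
    (x - m) ^ 2 ≤ k ^ 2 * t :=
  calc (x - m) ^ 2 = |x - m| ^ 2 := (sq_abs _).symm
    _ ≤ (k * √t) ^ 2 := pow_le_pow_left₀ (abs_nonneg _) h 2
    _ = k ^ 2 * t := by rw [mul_pow, sq_sqrt ht]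

lemma pos_of_abs_sub_div_three_le {x t k : ℝ} (ht : 9 * k ^ 2 < t)
    (h : |x - t / 3| ≤ k * √t) : 0 < x := by
  have h3k : 3 * k < √t := lt_sqrt_of_sq_lt (by linarith)
  have ht0 : 0 < t := lt_of_le_of_lt (by positivity) ht
  have hsqrt : 0 < √t := sqrt_pos.2 ht0
  have hsq : √t ^ 2 = t := sq_sqrt ht0.le
  nlinarith [(abs_le.mp h).1, mul_pos hsqrt (sub_pos.2 h3k)]

theorem stmt_15_general (k : ℝ) :
    ∃ k₀ > 0, ∃ t₀ : ℕ, ∀ t : ℕ, t₀ ≤ t →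
      ∀ n₁ n₂ n₃ : ℕ, n₁ + n₂ + n₃ = t →
        |(n₁ : ℝ) - t / 3| ≤ k * Real.sqrt t →
        |(n₂ : ℝ) - t / 3| ≤ k * Real.sqrt t →
        |(n₃ : ℝ) - t / 3| ≤ k * Real.sqrt t →
        k₀ / t ≤ ((t.factorial : ℝ)
            / (n₁.factorial * n₂.factorial * n₃.factorial)) * (1 / 3) ^ t := by
  refine ⟨√(2 * π) / exp 1 ^ 3 * exp (-(9 * k ^ 2)), by positivity, ⌊9 * k ^ 2⌋₊ + 1, ?_⟩
  rintro _ ht n₁ n₂ n₃ rfl h₁ h₂ h₃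
  have hlarge : 9 * k ^ 2 < (n₁ + n₂ + n₃ : ℕ) :=
    (Nat.lt_floor_add_one _).trans_le (by exact_mod_cast ht)
  have htpos : (0 : ℝ) < (n₁ + n₂ + n₃ : ℕ) := lt_of_le_of_lt (by positivity) hlarge
  have hdev : 3 * sqDeviation n₁ n₂ n₃ / (n₁ + n₂ + n₃ : ℕ) ≤ 9 * k ^ 2 := by
    rw [div_le_iff₀ (by positivity), sqDeviation]
    linarith [sq_sub_le_of_abs_sub_le_mul_sqrt htpos.le h₁,
      sq_sub_le_of_abs_sub_le_mul_sqrt htpos.le h₂, sq_sub_le_of_abs_sub_le_mul_sqrt htpos.le h₃]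
  calc _ ≤ √(2 * π) / exp 1 ^ 3 * exp (-(3 * sqDeviation n₁ n₂ n₃ / (n₁ + n₂ + n₃ : ℕ)))
        / (n₁ + n₂ + n₃ : ℕ) := by gcongr
    _ ≤ _ := le_factorial_div_mul_third_pow
      (by exact_mod_cast (pos_of_abs_sub_div_three_le hlarge h₁).ne')
      (by exact_mod_cast (pos_of_abs_sub_div_three_le hlarge h₂).ne')
      (by exact_mod_cast (pos_of_abs_sub_div_three_le hlarge h₃).ne')

/-- Local central limit lower bound for the symmetric multinomial distribution with
three equiprobable outcomes: for any constant `k`, there is `k₀ > 0` such that for `t`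
large, any outcome vector `(n₁,n₂,n₃)` with `n₁+n₂+n₃ = t` and each `nᵢ` within `k√t`
of `t/3` satisfies `multinomial(t; n₁,n₂,n₃)·(1/3)^t ≥ k₀/t`. -/
theorem stmt_15 (k : ℝ) (hk : 0 < k) :
    ∃ k₀ > 0, ∃ t₀ : ℕ, ∀ t : ℕ, t₀ ≤ t →
      ∀ n₁ n₂ n₃ : ℕ, n₁ + n₂ + n₃ = t →
        |(n₁ : ℝ) - t / 3| ≤ k * Real.sqrt t →
        |(n₂ : ℝ) - t / 3| ≤ k * Real.sqrt t →
        |(n₃ : ℝ) - t / 3| ≤ k * Real.sqrt t →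
        k₀ / t ≤ ((t.factorial : ℝ)
            / (n₁.factorial * n₂.factorial * n₃.factorial)) * (1 / 3) ^ t :=
  stmt_15_general k
end
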